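/- The family of tetrahedra {Tⁱ_P : i ∈ {1,…,6}, P ∈ ℤ³} covers ℝ³ (every point of ℝ³ lies in some Tⁱ_P), and any two distinct members of this family have disjoint interiors. -/

import Mathlib

/-- The vertices of the six tetrahedra `Tⁱ_P` subdividing the unit cube with lowest corner
`P = (p,q,r)`, as integer points. -/
def tetVerts (i : Fin 6) (p q r : ℤ) : Fin 4 → (Fin 3 → ℤ) :=
  match i with
  | 0 => ![![p, q, r], ![p + 1, q, r], ![p, q + 1, r], ![p, q, r + 1]]
  | 1 => ![![p + 1, q + 1, r], ![p + 1, q, r], ![p, q + 1, r], ![p, q, r + 1]]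
  | 2 => ![![p + 1, q, r], ![p + 1, q + 1, r], ![p, q, r + 1], ![p + 1, q, r + 1]]
  | 3 => ![![p, q + 1, r], ![p + 1, q + 1, r], ![p, q, r + 1], ![p, q + 1, r + 1]]
  | 4 => ![![p + 1, q + 1, r], ![p + 1, q, r + 1], ![p, q + 1, r + 1], ![p, q, r + 1]]
  | 5 => ![![p + 1, q + 1, r], ![p + 1, q, r + 1], ![p, q + 1, r + 1], ![p + 1, q + 1, r + 1]]

/-- The tetrahedron `Tⁱ_P ⊆ ℝ³`: the convex hull of its four vertices. -/
noncomputable def tet (i : Fin 6) (p q r : ℤ) : Set (Fin 3 → ℝ) :=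
  convexHull ℝ (Set.range fun a : Fin 4 => fun k : Fin 3 => ((tetVerts i p q r a k : ℤ) : ℝ))

/-!
Every `Tⁱ_P` is the lattice translate by `P` of a simplex `Tⁱ_0` of the unit cube, and the six
simplices `Tⁱ_0` are the cells into which the planes `y₀ + y₂ = 1`, `y₁ + y₂ = 1` and
`y₀ + y₁ + y₂ = 1, 2` cut `[0,1]³`. The barycentric coordinates of each `Tⁱ_0` are explicit affine
functions, so its vertices form an affine basis; hence `Tⁱ_P` is the set of `x` at which these
coordinates, evaluated at `x - P`, are nonnegative, and its interior the set where they are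
positive. Covering: `x - ⌊x⌋` lies in `[0,1]³`, hence in one of the cells. Disjointness: if `x` is
interior to `Tⁱ_P`, then `x - P` lies in the open unit cube, which forces `P = ⌊x⌋`, and the strict
inequalities defining the interiors of two different cells are incompatible.
-/

open Set Module Matrix

section Barycentric

variable {ι E : Type*} [Fintype ι] {v : ι → E} {w : E → ι → ℝ}

section AddCommGroup

variable [AddCommGroup E] [Module ℝ E]

/-- Points through which every point is an affine combination span the space; since there are
`finrank + 1` of them, they are also affinely independent. -/
noncomputable def AffineBasis.ofAffineCombination (hcard : Fintype.card ι = finrank ℝ E + 1)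
    (hsum : ∀ x, ∑ a, w x a = 1) (hcomb : ∀ x, ∑ a, w x a • v a = x) : AffineBasis ι ℝ E :=
  have tot : affineSpan ℝ (range v) = ⊤ := by
    refine eq_top_iff.2 fun x _ => ?_
    have := affineCombination_mem_affineSpan (hsum x) v
    rwa [Finset.univ.affineCombination_eq_linear_combination _ _ (hsum x), hcomb] at this
  ⟨v, (affineIndependent_iff_le_finrank_vectorSpan ℝ v hcard).2 (by
    rw [AffineSubspace.vectorSpan_eq_top_of_affineSpan_eq_top ℝ E E tot, finrank_top]), tot⟩

@[simp]
theorem AffineBasis.coe_ofAffineCombination (hcard : Fintype.card ι = finrank ℝ E + 1)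
    (hsum : ∀ x, ∑ a, w x a = 1) (hcomb : ∀ x, ∑ a, w x a • v a = x) :
    ⇑(ofAffineCombination hcard hsum hcomb) = v :=
  rfl

@[simp]
theorem AffineBasis.coord_ofAffineCombination (hcard : Fintype.card ι = finrank ℝ E + 1)
    (hsum : ∀ x, ∑ a, w x a = 1) (hcomb : ∀ x, ∑ a, w x a • v a = x) (a : ι) (x : E) :
    (ofAffineCombination hcard hsum hcomb).coord a x = w x a := by
  conv_lhs => rw [← hcomb x, ← Finset.univ.affineCombination_eq_linear_combination _ _ (hsum x)]
  exact coord_apply_combination_of_mem _ (Finset.mem_univ a) (hsum x)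

theorem convexHull_range_eq_setOf_nonneg (hcard : Fintype.card ι = finrank ℝ E + 1)
    (hsum : ∀ x, ∑ a, w x a = 1) (hcomb : ∀ x, ∑ a, w x a • v a = x) :
    convexHull ℝ (range v) = {x | ∀ a, 0 ≤ w x a} := by
  simpa using (AffineBasis.ofAffineCombination hcard hsum hcomb).convexHull_eq_nonneg_coord

end AddCommGroup

theorem interior_convexHull_range_eq_setOf_pos [NormedAddCommGroup E] [NormedSpace ℝ E]
    (hcard : Fintype.card ι = finrank ℝ E + 1)
    (hsum : ∀ x, ∑ a, w x a = 1) (hcomb : ∀ x, ∑ a, w x a • v a = x) :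
    interior (convexHull ℝ (range v)) = {x | ∀ a, 0 < w x a} := by
  simpa using (AffineBasis.ofAffineCombination hcard hsum hcomb).interior_convexHull

end Barycentric

/-- `bary i y` are the barycentric coordinates of `y` with respect to the vertices of `Tⁱ_0`,
listed in the order of `tetVerts i 0 0 0`. -/
def bary : Fin 6 → (Fin 3 → ℝ) → Fin 4 → ℝ
  | 0, y => ![1 - y 0 - y 1 - y 2, y 0, y 1, y 2]
  | 1, y => ![y 0 + y 1 + y 2 - 1, 1 - y 1 - y 2, 1 - y 0 - y 2, y 2]
  | 2, y => ![1 - y 1 - y 2, y 1, 1 - y 0, y 0 + y 2 - 1]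
  | 3, y => ![1 - y 0 - y 2, y 0, 1 - y 1, y 1 + y 2 - 1]
  | 4, y => ![1 - y 2, y 0 + y 2 - 1, y 1 + y 2 - 1, 2 - y 0 - y 1 - y 2]
  | 5, y => ![1 - y 2, 1 - y 1, 1 - y 0, y 0 + y 1 + y 2 - 2]

theorem sum_bary (i : Fin 6) (y : Fin 3 → ℝ) : ∑ a, bary i y a = 1 := by
  fin_cases i <;> simp only [bary, Fin.sum_univ_four, cons_val_zero, cons_val_one, cons_val] <;>
    ring

theorem sum_bary_smul_tetVerts (i : Fin 6) (p q r : ℤ) (x : Fin 3 → ℝ) :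
    ∑ a, bary i (x - ![(p : ℝ), q, r]) a • (fun k => (tetVerts i p q r a k : ℝ)) = x := by
  funext k
  fin_cases i <;> fin_cases k <;>
    simp only [bary, tetVerts, Fin.sum_univ_four, Finset.sum_apply, Pi.smul_apply, smul_eq_mul,
      Pi.sub_apply, cons_val_zero, cons_val_one, cons_val, cons_val', cons_val_fin_one,
      Fin.zero_eta, Fin.mk_one, Fin.reduceFinMk, Int.cast_add, Int.cast_one] <;> ring

theorem tet_eq_setOf_bary_nonneg (i : Fin 6) (p q r : ℤ) :
    tet i p q r = {x | ∀ a, 0 ≤ bary i (x - ![(p : ℝ), q, r]) a} :=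
  convexHull_range_eq_setOf_nonneg (by simp) (fun _ => sum_bary i _)
    (sum_bary_smul_tetVerts i p q r)

theorem interior_tet_eq_setOf_bary_pos (i : Fin 6) (p q r : ℤ) :
    interior (tet i p q r) = {x | ∀ a, 0 < bary i (x - ![(p : ℝ), q, r]) a} :=
  interior_convexHull_range_eq_setOf_pos (by simp) (fun _ => sum_bary i _)
    (sum_bary_smul_tetVerts i p q r)

theorem exists_bary_nonneg {y : Fin 3 → ℝ} (hy : ∀ k, y k ∈ Icc 0 1) :
    ∃ i, ∀ a, 0 ≤ bary i y a := by
  obtain ⟨⟨hy₀, hy₀'⟩, ⟨hy₁, hy₁'⟩, ⟨hy₂, hy₂'⟩⟩ := And.intro (hy 0) (And.intro (hy 1) (hy 2))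
  simp only [Fin.forall_fin_succ, IsEmpty.forall_iff, and_true]
  rcases le_total (y 0 + y 2) 1 with h₀₂ | h₀₂ <;> rcases le_total (y 1 + y 2) 1 with h₁₂ | h₁₂
  · rcases le_total (y 0 + y 1 + y 2) 1 with hs | hs
    · exact ⟨0, by simp only [bary, cons_val_zero, cons_val_succ]; and_intros <;> linarith⟩
    · exact ⟨1, by simp only [bary, cons_val_zero, cons_val_succ]; and_intros <;> linarith⟩
  · exact ⟨3, by simp only [bary, cons_val_zero, cons_val_succ]; and_intros <;> linarith⟩
  · exact ⟨2, by simp only [bary, cons_val_zero, cons_val_succ]; and_intros <;> linarith⟩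
  · rcases le_total (y 0 + y 1 + y 2) 2 with hs | hs
    · exact ⟨4, by simp only [bary, cons_val_zero, cons_val_succ]; and_intros <;> linarith⟩
    · exact ⟨5, by simp only [bary, cons_val_zero, cons_val_succ]; and_intros <;> linarith⟩

theorem mem_Ioo_of_bary_pos {i : Fin 6} {y : Fin 3 → ℝ} (h : ∀ a, 0 < bary i y a) :
    ∀ k, y k ∈ Ioo 0 1 := by
  simp only [Fin.forall_fin_succ, IsEmpty.forall_iff, and_true] at h ⊢
  simp only [Fin.succ_zero_eq_one, Fin.succ_one_eq_two, mem_Ioo]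
  fin_cases i <;> simp only [bary, cons_val_zero, cons_val_succ] at h <;>
    and_intros <;> linarith

theorem eq_of_bary_pos {i j : Fin 6} {y : Fin 3 → ℝ} (hi : ∀ a, 0 < bary i y a)
    (hj : ∀ a, 0 < bary j y a) : i = j := by
  simp only [Fin.forall_fin_succ, IsEmpty.forall_iff, and_true] at hi hj
  fin_cases i <;> fin_cases j <;>
    simp only [bary, cons_val_zero, cons_val_succ] at hi hj <;> first | rfl | linarith

theorem exists_mem_tet_floor (x : Fin 3 → ℝ) : ∃ i, x ∈ tet i ⌊x 0⌋ ⌊x 1⌋ ⌊x 2⌋ := by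
  have sub_floor_mem (t : ℝ) : t - ⌊t⌋ ∈ Icc 0 1 := by
    rw [Int.self_sub_floor]
    exact ⟨Int.fract_nonneg t, (Int.fract_lt_one t).le⟩
  have hcube : ∀ k, (x - ![(⌊x 0⌋ : ℝ), ⌊x 1⌋, ⌊x 2⌋]) k ∈ Icc 0 1 := by
    intro k
    fin_cases k <;> exact sub_floor_mem _
  simpa only [tet_eq_setOf_bary_nonneg, mem_ofPred_eq] using exists_bary_nonneg hcube

theorem eq_floor_of_mem_interior_tet {i : Fin 6} {p q r : ℤ} {x : Fin 3 → ℝ}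
    (hx : x ∈ interior (tet i p q r)) : p = ⌊x 0⌋ ∧ q = ⌊x 1⌋ ∧ r = ⌊x 2⌋ := by
  have eq_floor {n : ℤ} {t : ℝ} (ht : t - n ∈ Ioo 0 1) : n = ⌊t⌋ :=
    (Int.floor_eq_iff.2 ⟨by linarith [ht.1], by linarith [ht.2]⟩).symm
  rw [interior_tet_eq_setOf_bary_pos] at hx
  have hcube := mem_Ioo_of_bary_pos hx
  exact ⟨eq_floor (hcube 0), eq_floor (hcube 1), eq_floor (hcube 2)⟩

theorem eq_of_mem_interior_tet {i i' : Fin 6} {p q r p' q' r' : ℤ} {x : Fin 3 → ℝ}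
    (hx : x ∈ interior (tet i p q r)) (hx' : x ∈ interior (tet i' p' q' r')) :
    (i, p, q, r) = (i', p', q', r') := by
  obtain ⟨rfl, rfl, rfl⟩ := eq_floor_of_mem_interior_tet hx
  obtain ⟨rfl, rfl, rfl⟩ := eq_floor_of_mem_interior_tet hx'
  rw [interior_tet_eq_setOf_bary_pos] at hx hx'
  rw [eq_of_bary_pos hx hx']

theorem tets_cover_and_disjoint_interiors :
    (∀ x : Fin 3 → ℝ, ∃ (i : Fin 6) (p q r : ℤ), x ∈ tet i p q r) ∧
    (∀ (i : Fin 6) (p q r : ℤ) (i' : Fin 6) (p' q' r' : ℤ),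
      (i, p, q, r) ≠ (i', p', q', r') →
      Disjoint (interior (tet i p q r)) (interior (tet i' p' q' r'))) := by
  refine ⟨fun x => ?_, fun i p q r i' p' q' r' hne => ?_⟩
  · obtain ⟨i, hi⟩ := exists_mem_tet_floor x
    exact ⟨i, _, _, _, hi⟩
  · exact disjoint_left.2 fun x hx hx' => hne (eq_of_mem_interior_tet hx hx')
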